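/- Let λ₁λ₂ > 0, Q(u) = (λ₁u₁² + λ₂u₂²)/2, X(u) = (u₁,u₂,Q(u)), let U ⊂ ℝ² be a bounded open set and U₀ ⊂ U a compact set. Set S_{Q,0} = X(U₀) and μ_Q = χ·H²⌊S_Q with S_Q = X(U), where χ : ℝ³ → [0,∞) is bounded and supported in S_{Q,0}. Fix C₁ ≥ 1 and L ≥ 1. Then there exist ρ₀ ∈ (0,1], σ₀ ∈ (0,1], and C ≥ 1, depending only on λ₁, λ₂, U₀, ‖χ‖_∞, C₁, and L, such that for every 0 < ρ ≤ ρ₀, every unit vector v ∈ ℝ³ that is relevant (i.e., there exists u ∈ U₀ with n_Q(u)·v = 0), every tube T of direction v, radius C₁ρ, and length parameter L, and every σ with ρ ≤ σ ≤ σ₀, one has μ_Q(E_v^ext ∩ N_σ(T)) ≤ C ρ^{1/2} σ, where E_v^ext := {X(u) : u ∈ U₀, |n_Q(u)·v| ≤ ρ^{1/2}} and N_σ(T) := {x ∈ ℝ³ : dist(x,T) ≤ σ}. -/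

import Mathlib

noncomputable section
open MeasureTheory Metric Set Function
open scoped ENNReal RealInnerProductSpace

abbrev E3 : Type := EuclideanSpace ℝ (Fin 3)
abbrev E2 : Type := EuclideanSpace ℝ (Fin 2)

def mk3 (a b c : ℝ) : E3 := (WithLp.equiv 2 (Fin 3 → ℝ)).symm ![a, b, c]

/-- Quadratic graph parametrization `X(u) = (u₁, u₂, (l₁u₁² + l₂u₂²)/2)`. -/
def Xf (l₁ l₂ : ℝ) (u : E2) : E3 := mk3 (u 0) (u 1) ((l₁ * (u 0) ^ 2 + l₂ * (u 1) ^ 2) / 2)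

/-- Unit normal of the quadratic graph at `X(u)`. -/
def nQ (l₁ l₂ : ℝ) (u : E2) : E3 :=
  (Real.sqrt (1 + l₁ ^ 2 * (u 0) ^ 2 + l₂ ^ 2 * (u 1) ^ 2))⁻¹ •
    mk3 (-(l₁ * u 0)) (-(l₂ * u 1)) 1

/-- The tube `T(v, y₀, s₀, r, L)`. -/
def tube (v y₀ : E3) (s₀ r L : ℝ) : Set E3 :=
  {x | ‖x - ⟪x, v⟫ • v - y₀‖ ≤ r ∧ |⟪x, v⟫ - s₀| ≤ L}

/-- The surface measure `μ_Q = χ·H²⌊S_Q` of the quadratic patch `S_Q = X(U)`. -/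
def muQ (l₁ l₂ : ℝ) (U : Set E2) (χ : E3 → ℝ) : Measure E3 :=
  ((μH[2] : Measure E3).restrict (Xf l₁ l₂ '' U)).withDensity fun x => ENNReal.ofReal (χ x)

/-!
Put `w = (-v₁, v₀, 0)`, a horizontal vector orthogonal to `v` with `‖w‖ ≤ 1`. Over `U₀` the
condition `|n_Q(u)·v| ≤ √ρ` is, up to the factor `√(1 + |∇Q(u)|²)`, the strip
`|l₁v₀u₀ + l₂v₁u₁ - v₂| ≲ √ρ` of the parameter plane, while the `σ`-neighbourhood of the tube lies
in the slab `|⟪x - y₀, w⟫| ≤ C₁ρ + σ`, i.e. over the strip `|-v₁u₀ + v₀u₁ - ⟪y₀, w⟫| ≤ C₁ρ + σ`.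
The two strips meet in a parallelogram of area `4 r₁ r₂ / |l₁v₀² + l₂v₁²|`. Ellipticity bounds
this determinant below by `min |lᵢ| (v₀² + v₁²)`, and since `v` is tangent to the graph over some
point of `U₀`, `v₀² + v₁² ≳ 1`. The graph map is Lipschitz over a disc containing `U₀`, so the
`H²`-measure of the image of the parallelogram is `≲ √ρ σ`.
-/

theorem inner_E3 (x y : E3) : ⟪x, y⟫ = x 0 * y 0 + x 1 * y 1 + x 2 * y 2 := by
  simp only [PiLp.inner_apply, RCLike.inner_apply, Real.ringHom_apply, Fin.sum_univ_three]
  ring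

theorem sq_add_sq_add_sq_E3 {v : E3} (hv : ‖v‖ = 1) : v 0 ^ 2 + v 1 ^ 2 + v 2 ^ 2 = 1 := by
  have h := real_inner_self_eq_norm_sq v
  rw [inner_E3, hv] at h
  linarith

@[simp] theorem mk3_apply_zero (a b c : ℝ) : mk3 a b c 0 = a := rfl
@[simp] theorem mk3_apply_one (a b c : ℝ) : mk3 a b c 1 = b := rfl
@[simp] theorem mk3_apply_two (a b c : ℝ) : mk3 a b c 2 = c := rfl

open Matrix in
theorem volume_setOf_forall_abs_mulVec_sub_le {ι : Type*} [Fintype ι] [DecidableEq ι]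
    (M : Matrix ι ι ℝ) (hM : M.det ≠ 0) (c r : ι → ℝ) :
    volume {x : ι → ℝ | ∀ i, |(M *ᵥ x) i - c i| ≤ r i} =
      ENNReal.ofReal |M.det|⁻¹ * ∏ i, ENNReal.ofReal (2 * r i) := by
  have hset : {x : ι → ℝ | ∀ i, |(M *ᵥ x) i - c i| ≤ r i} =
      Matrix.toLin' M ⁻¹' univ.pi fun i => Icc (c i - r i) (c i + r i) := by
    ext x
    simp only [mem_ofPred_eq, mem_preimage, mem_univ_pi, mem_Icc, Matrix.toLin'_apply, abs_le]
    refine forall_congr' fun i => ?_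
    constructor <;> rintro ⟨h₁, h₂⟩ <;> constructor <;> linarith
  rw [hset, Measure.addHaar_preimage_linearMap _ (by rwa [LinearMap.det_toLin']),
    LinearMap.det_toLin', volume_pi_pi, abs_inv]
  simp only [Real.volume_Icc]
  ring_nf

theorem volume_abs_sub_le_and_abs_sub_le {a₀ a₁ b₀ b₁ : ℝ} (hd : a₀ * b₁ - a₁ * b₀ ≠ 0)
    (c₁ c₂ r₁ : ℝ) {r₂ : ℝ} (hr₂ : 0 ≤ r₂) :
    volume {x : Fin 2 → ℝ | |a₀ * x 0 + a₁ * x 1 - c₁| ≤ r₁ ∧ |b₀ * x 0 + b₁ * x 1 - c₂| ≤ r₂} =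
      ENNReal.ofReal (4 * r₁ * r₂ / |a₀ * b₁ - a₁ * b₀|) := by
  have hdet : Matrix.det !![a₀, a₁; b₀, b₁] = a₀ * b₁ - a₁ * b₀ := Matrix.det_fin_two_of _ _ _ _
  convert volume_setOf_forall_abs_mulVec_sub_le _ (hdet ▸ hd) ![c₁, c₂] ![r₁, r₂] using 2
  · simp [Fin.forall_fin_two, Matrix.mulVec, dotProduct, Fin.sum_univ_two]
  · rw [Fin.prod_univ_two, hdet, ← mul_assoc, ← ENNReal.ofReal_mul (by positivity),
      ← ENNReal.ofReal_mul' (by simpa using hr₂)]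
    simp only [Matrix.cons_val_zero, Matrix.cons_val_one]
    ring_nf

theorem hausdorffMeasure_image_le_volume {ι Y : Type*} [Fintype ι] [EMetricSpace Y]
    [MeasurableSpace Y] [BorelSpace Y] {f : (ι → ℝ) → Y} {K : NNReal} {s : Set (ι → ℝ)}
    (hf : LipschitzOnWith K f s) :
    μH[Fintype.card ι] (f '' s) ≤ (K : ℝ≥0∞) ^ Fintype.card ι * volume s := by
  simpa [hausdorffMeasure_pi_real] using
    hf.hausdorffMeasure_image_le (d := Fintype.card ι) (by positivity)

theorem sq_sub_le_dist_sq {ι : Type*} [Fintype ι] (x y : ι → ℝ) (i : ι) :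
    (x i - y i) ^ 2 ≤ dist x y ^ 2 := by
  have h := dist_le_pi_dist x y i
  rw [Real.dist_eq] at h
  simpa only [sq_abs] using pow_le_pow_left₀ (abs_nonneg _) h 2

theorem sq_add_le_of_mem_closedBall {ι : Type*} [Fintype ι] {R : ℝ} {x y : ι → ℝ}
    (hx : x ∈ closedBall 0 R) (hy : y ∈ closedBall 0 R) (i : ι) :
    (x i + y i) ^ 2 ≤ (2 * R) ^ 2 := by
  rw [mem_closedBall_zero_iff] at hx hy
  have hxi := (Real.norm_eq_abs _ ▸ norm_le_pi_norm x i).trans hx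
  have hyi := (Real.norm_eq_abs _ ▸ norm_le_pi_norm y i).trans hy
  exact sq_le_sq' (by linarith [neg_abs_le (x i), neg_abs_le (y i)])
    (by linarith [le_abs_self (x i), le_abs_self (y i)])

/-- `Xf` read in the coordinates `Fin 2 → ℝ`, whose sup metric makes `μH[2] = volume`. -/
def quadChart (l₁ l₂ : ℝ) (x : Fin 2 → ℝ) : E3 := Xf l₁ l₂ (WithLp.toLp 2 x)

theorem lipschitzOnWith_quadChart (l₁ l₂ R : ℝ) :
    LipschitzOnWith (Real.toNNReal √(2 * (1 + (l₁ ^ 2 + l₂ ^ 2) * R ^ 2))) (quadChart l₁ l₂)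
      (closedBall 0 R) := by
  refine LipschitzOnWith.of_dist_le_mul fun x hx y hy => ?_
  rw [Real.coe_toNNReal _ (Real.sqrt_nonneg _), EuclideanSpace.dist_eq]
  simp only [Fin.sum_univ_three, quadChart, Xf, mk3_apply_zero, mk3_apply_one, mk3_apply_two,
    Real.dist_eq, sq_abs]
  -- `Q x - Q y = (l₁ (x₀ + y₀)(x₀ - y₀) + l₂ (x₁ + y₁)(x₁ - y₁)) / 2`
  have hQ : ((l₁ * x 0 ^ 2 + l₂ * x 1 ^ 2) / 2 - (l₁ * y 0 ^ 2 + l₂ * y 1 ^ 2) / 2) ^ 2 ≤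
      2 * (l₁ ^ 2 + l₂ ^ 2) * R ^ 2 * dist x y ^ 2 := by
    have h₀ := mul_le_mul (sq_add_le_of_mem_closedBall hx hy 0) (sq_sub_le_dist_sq x y 0)
      (sq_nonneg _) (sq_nonneg _)
    have h₁ := mul_le_mul (sq_add_le_of_mem_closedBall hx hy 1) (sq_sub_le_dist_sq x y 1)
      (sq_nonneg _) (sq_nonneg _)
    nlinarith [sq_nonneg (l₁ * (x 0 + y 0) * (x 0 - y 0) - l₂ * (x 1 + y 1) * (x 1 - y 1)),
      mul_le_mul_of_nonneg_left h₀ (sq_nonneg l₁), mul_le_mul_of_nonneg_left h₁ (sq_nonneg l₂)]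
  rw [← Real.sqrt_sq dist_nonneg, ← Real.sqrt_mul' _ (sq_nonneg _)]
  refine Real.sqrt_le_sqrt ?_
  nlinarith [sq_sub_le_dist_sq x y 0, sq_sub_le_dist_sq x y 1]

theorem hausdorffMeasure_quadChart_image_le (l₁ l₂ R : ℝ) {a₀ a₁ b₀ b₁ d : ℝ} (hd : 0 < d)
    (hdet : d ≤ |a₀ * b₁ - a₁ * b₀|) (c₁ c₂ : ℝ) {r₁ r₂ : ℝ} (hr₁ : 0 ≤ r₁) (hr₂ : 0 ≤ r₂) :
    μH[2] (quadChart l₁ l₂ '' (closedBall 0 R ∩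
        {x | |a₀ * x 0 + a₁ * x 1 - c₁| ≤ r₁ ∧ |b₀ * x 0 + b₁ * x 1 - c₂| ≤ r₂})) ≤
      ENNReal.ofReal (2 * (1 + (l₁ ^ 2 + l₂ ^ 2) * R ^ 2) * (4 * r₁ * r₂ / d)) := by
  have hK : ((Real.toNNReal √(2 * (1 + (l₁ ^ 2 + l₂ ^ 2) * R ^ 2))) : ℝ≥0∞) ^ 2 =
      ENNReal.ofReal (2 * (1 + (l₁ ^ 2 + l₂ ^ 2) * R ^ 2)) := by
    change ENNReal.ofReal _ ^ 2 = _
    rw [← ENNReal.ofReal_pow (Real.sqrt_nonneg _), Real.sq_sqrt (by positivity)]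
  calc μH[2] _ ≤ _ := by
        simpa only [Fintype.card_fin, Nat.cast_ofNat] using hausdorffMeasure_image_le_volume
          ((lipschitzOnWith_quadChart l₁ l₂ R).mono inter_subset_left)
    _ ≤ ENNReal.ofReal (2 * (1 + (l₁ ^ 2 + l₂ ^ 2) * R ^ 2)) *
          ENNReal.ofReal (4 * r₁ * r₂ / d) := by
      rw [hK]
      gcongr
      refine (measure_mono inter_subset_right).trans ?_
      rw [volume_abs_sub_le_and_abs_sub_le (abs_pos.1 (hd.trans_le hdet)) c₁ c₂ r₁ hr₂]
      gcongr
    _ = _ := (ENNReal.ofReal_mul (by positivity)).symm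

theorem muQ_apply_le {l₁ l₂ M : ℝ} {U : Set E2} {χ : E3 → ℝ} (hχ : ∀ x, χ x ≤ M) (s : Set E3) :
    muQ l₁ l₂ U χ s ≤ ENNReal.ofReal M * μH[2] s := by
  have hle : muQ l₁ l₂ U χ ≤ ENNReal.ofReal M • (μH[2] : Measure E3) :=
    calc muQ l₁ l₂ U χ ≤ ((μH[2] : Measure E3).restrict (Xf l₁ l₂ '' U)).withDensity
            fun _ => ENNReal.ofReal M :=
          withDensity_mono (ae_of_all _ fun x => ENNReal.ofReal_le_ofReal (hχ x))
      _ ≤ ENNReal.ofReal M • (μH[2] : Measure E3) := by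
          rw [withDensity_const]; gcongr; exact Measure.restrict_le_self
  exact Measure.le_iff'.1 hle s

theorem inner_nQ_mul_sqrt (l₁ l₂ : ℝ) (u : E2) (v : E3) :
    ⟪nQ l₁ l₂ u, v⟫ * √(1 + l₁ ^ 2 * u 0 ^ 2 + l₂ ^ 2 * u 1 ^ 2) =
      v 2 - (l₁ * u 0 * v 0 + l₂ * u 1 * v 1) := by
  have : 0 < √(1 + l₁ ^ 2 * u 0 ^ 2 + l₂ ^ 2 * u 1 ^ 2) := by positivity
  rw [nQ, real_inner_smul_left, inner_E3]
  simp only [mk3_apply_zero, mk3_apply_one, mk3_apply_two]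
  field_simp
  ring

theorem one_add_sq_le_of_norm_le {l₁ l₂ R : ℝ} {u : E2} (hu : ‖u‖ ≤ R) :
    1 + l₁ ^ 2 * u 0 ^ 2 + l₂ ^ 2 * u 1 ^ 2 ≤ 1 + (l₁ ^ 2 + l₂ ^ 2) * R ^ 2 := by
  have h : ∀ i, u i ^ 2 ≤ R ^ 2 := fun i => by
    simpa only [Real.norm_eq_abs, sq_abs] using
      pow_le_pow_left₀ (norm_nonneg _) ((PiLp.norm_apply_le u i).trans hu) 2
  nlinarith [mul_le_mul_of_nonneg_left (h 0) (sq_nonneg l₁),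
    mul_le_mul_of_nonneg_left (h 1) (sq_nonneg l₂)]

theorem one_le_mul_of_inner_nQ_eq_zero {l₁ l₂ : ℝ} {u : E2} {v : E3} (hv : ‖v‖ = 1)
    (h : ⟪nQ l₁ l₂ u, v⟫ = 0) :
    1 ≤ (1 + l₁ ^ 2 * u 0 ^ 2 + l₂ ^ 2 * u 1 ^ 2) * (v 0 ^ 2 + v 1 ^ 2) := by
  have hv₂ := inner_nQ_mul_sqrt l₁ l₂ u v
  rw [h, zero_mul, eq_comm, sub_eq_zero] at hv₂
  have hv₁ := sq_add_sq_add_sq_E3 hv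
  rw [hv₂] at hv₁
  -- Cauchy–Schwarz for `v₂ = ⟨∇Q(u), (v₀, v₁)⟩`
  nlinarith [sq_nonneg (l₁ * u 0 * v 1 - l₂ * u 1 * v 0)]

theorem min_abs_mul_le_abs_add_of_mul_pos {l₁ l₂ : ℝ} (hl : 0 < l₁ * l₂) (a b : ℝ) :
    min |l₁| |l₂| * (a ^ 2 + b ^ 2) ≤ |l₁ * a ^ 2 + l₂ * b ^ 2| := by
  rcases mul_pos_iff.1 hl with ⟨h₁, h₂⟩ | ⟨h₁, h₂⟩
  · rw [abs_of_pos h₁, abs_of_pos h₂, abs_of_nonneg (by positivity)]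
    nlinarith [min_le_left l₁ l₂, min_le_right l₁ l₂, sq_nonneg a, sq_nonneg b]
  · rw [abs_of_neg h₁, abs_of_neg h₂, abs_of_nonpos (by nlinarith [sq_nonneg a, sq_nonneg b])]
    nlinarith [min_le_left (-l₁) (-l₂), min_le_right (-l₁) (-l₂), sq_nonneg a, sq_nonneg b]

theorem min_abs_div_le_abs_of_inner_nQ_eq_zero {l₁ l₂ R : ℝ} (hl : 0 < l₁ * l₂) {u : E2}
    (hu : ‖u‖ ≤ R) {v : E3} (hv : ‖v‖ = 1) (h : ⟪nQ l₁ l₂ u, v⟫ = 0) :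
    min |l₁| |l₂| / (1 + (l₁ ^ 2 + l₂ ^ 2) * R ^ 2) ≤ |l₁ * v 0 ^ 2 + l₂ * v 1 ^ 2| := by
  have hm : 0 ≤ min |l₁| |l₂| := le_min (abs_nonneg _) (abs_nonneg _)
  have hN : 1 ≤ (1 + (l₁ ^ 2 + l₂ ^ 2) * R ^ 2) * (v 0 ^ 2 + v 1 ^ 2) :=
    (one_le_mul_of_inner_nQ_eq_zero hv h).trans
      (mul_le_mul_of_nonneg_right (one_add_sq_le_of_norm_le hu) (by positivity))
  refine le_trans ?_ (min_abs_mul_le_abs_add_of_mul_pos hl (v 0) (v 1))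
  rw [div_le_iff₀ (by positivity)]
  nlinarith

theorem tube_nonempty {v y₀ : E3} {s₀ r L : ℝ} (hv : ‖v‖ = 1) (hy₀ : ⟪y₀, v⟫ = 0) (hr : 0 ≤ r)
    (hL : 0 ≤ L) : (tube v y₀ s₀ r L).Nonempty := by
  have hinner : ⟪y₀ + s₀ • v, v⟫ = s₀ := by
    rw [inner_add_left, real_inner_smul_left, hy₀, real_inner_self_eq_norm_sq, hv]; ring
  exact ⟨y₀ + s₀ • v, by simpa [hinner] using hr, by simpa [hinner] using hL⟩

theorem abs_inner_sub_le_of_mem_tube {v y₀ w x : E3} {s₀ r L : ℝ} (hw : ⟪v, w⟫ = 0)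
    (hx : x ∈ tube v y₀ s₀ r L) : |⟪x - y₀, w⟫| ≤ r * ‖w‖ := by
  have : ⟪x - y₀, w⟫ = ⟪x - ⟪x, v⟫ • v - y₀, w⟫ := by
    simp only [inner_sub_left, real_inner_smul_left, hw]; ring
  rw [this]
  exact (abs_real_inner_le_norm _ _).trans (mul_le_mul_of_nonneg_right hx.1 (norm_nonneg w))

theorem abs_inner_sub_le_of_infDist_tube_le {v y₀ w x : E3} {s₀ r L σ : ℝ} (hw : ⟪v, w⟫ = 0)
    (hw₁ : ‖w‖ ≤ 1) (hr : 0 ≤ r) (hT : (tube v y₀ s₀ r L).Nonempty)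
    (hx : infDist x (tube v y₀ s₀ r L) ≤ σ) : |⟪x - y₀, w⟫| ≤ r + σ := by
  refine le_of_forall_pos_lt_add fun ε hε => ?_
  obtain ⟨x', hx', hxx'⟩ := (infDist_lt_iff hT).1 (hx.trans_lt (lt_add_of_pos_right σ hε))
  have hsplit : ⟪x - y₀, w⟫ = ⟪x - x', w⟫ + ⟪x' - y₀, w⟫ := by
    rw [← inner_add_left, sub_add_sub_cancel]
  have h₁ : |⟪x - x', w⟫| ≤ dist x x' := by
    rw [dist_eq_norm]
    exact (abs_real_inner_le_norm _ _).trans (mul_le_of_le_one_right (norm_nonneg _) hw₁)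
  have h₂ : |⟪x' - y₀, w⟫| ≤ r :=
    (abs_inner_sub_le_of_mem_tube hw hx').trans (mul_le_of_le_one_right hr hw₁)
  rw [hsplit]
  linarith [abs_add_le ⟪x - x', w⟫ ⟪x' - y₀, w⟫]

theorem image_sublevel_inter_thickening_subset {l₁ l₂ R ρ σ r L s₀ : ℝ} {U₀ : Set E2}
    (hR : U₀ ⊆ closedBall 0 R) {v y₀ : E3} (hv : ‖v‖ = 1) (hy₀ : ⟪y₀, v⟫ = 0) (hr : 0 ≤ r)
    (hL : 0 ≤ L) :
    Xf l₁ l₂ '' {u : E2 | u ∈ U₀ ∧ |⟪nQ l₁ l₂ u, v⟫| ≤ √ρ} ∩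
        {x : E3 | infDist x (tube v y₀ s₀ r L) ≤ σ} ⊆
      quadChart l₁ l₂ '' (closedBall 0 R ∩
        {x | |l₁ * v 0 * x 0 + l₂ * v 1 * x 1 - v 2| ≤ √(1 + (l₁ ^ 2 + l₂ ^ 2) * R ^ 2) * √ρ ∧
          |-v 1 * x 0 + v 0 * x 1 - ⟪y₀, mk3 (-v 1) (v 0) 0⟫| ≤ r + σ}) := by
  set w : E3 := mk3 (-v 1) (v 0) 0
  have hvw : ⟪v, w⟫ = 0 := by
    simp only [w, inner_E3, mk3_apply_zero, mk3_apply_one, mk3_apply_two]; ring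
  have hw : ‖w‖ ≤ 1 := by
    have h := real_inner_self_eq_norm_sq w
    simp only [inner_E3, w, mk3_apply_zero, mk3_apply_one, mk3_apply_two] at h
    nlinarith [sq_add_sq_add_sq_E3 hv, norm_nonneg w]
  rintro _ ⟨⟨u, ⟨hu, hnu⟩, rfl⟩, hdist⟩
  have huR : ‖u‖ ≤ R := mem_closedBall_zero_iff.1 (hR hu)
  refine ⟨WithLp.ofLp u, ⟨?_, ?_, ?_⟩, rfl⟩
  · exact mem_closedBall_zero_iff.2 <| (pi_norm_le_iff_of_nonneg ((norm_nonneg u).trans huR)).2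
      fun i => (PiLp.norm_apply_le u i).trans huR
  · have h := inner_nQ_mul_sqrt l₁ l₂ u v
    calc |l₁ * v 0 * u 0 + l₂ * v 1 * u 1 - v 2|
        = |⟪nQ l₁ l₂ u, v⟫| * √(1 + l₁ ^ 2 * u 0 ^ 2 + l₂ ^ 2 * u 1 ^ 2) := by
          rw [← abs_of_nonneg (Real.sqrt_nonneg (1 + l₁ ^ 2 * u 0 ^ 2 + l₂ ^ 2 * u 1 ^ 2)),
            ← abs_mul, h, abs_sub_comm]
          ring_nf
      _ ≤ √ρ * √(1 + (l₁ ^ 2 + l₂ ^ 2) * R ^ 2) :=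
          mul_le_mul hnu (Real.sqrt_le_sqrt (one_add_sq_le_of_norm_le huR))
            (Real.sqrt_nonneg _) (Real.sqrt_nonneg _)
      _ = _ := mul_comm _ _
  · have h := abs_inner_sub_le_of_infDist_tube_le hvw hw hr (tube_nonempty hv hy₀ hr hL) hdist
    rw [inner_sub_left, inner_E3] at h
    convert h using 3
    simp only [Xf, w, mk3_apply_zero, mk3_apply_one, mk3_apply_two]
    ring

/-- elliptic tubular sublevel estimate
`μ_Q(E_v^ext ∩ N_σ(T)) ≤ C ρ^{1/2} σ`. -/
theorem elliptic_tubular_sublevel (l₁ l₂ Mχ C₁ L : ℝ) (hl : 0 < l₁ * l₂)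
    (hMχ : 0 ≤ Mχ) (hC₁ : 1 ≤ C₁) (hL : 1 ≤ L)
    (U₀ : Set E2) (hU₀ : IsCompact U₀) :
    ∃ ρ₀ ∈ Set.Ioc (0 : ℝ) 1, ∃ σ₀ ∈ Set.Ioc (0 : ℝ) 1, ∃ C : ℝ, 1 ≤ C ∧
      ∀ U : Set E2, IsOpen U → Bornology.IsBounded U → U₀ ⊆ U →
      ∀ χ : E3 → ℝ, (∀ x, 0 ≤ χ x) → (∀ x, χ x ≤ Mχ) →
        Function.support χ ⊆ Xf l₁ l₂ '' U₀ →
        ∀ ρ : ℝ, 0 < ρ → ρ ≤ ρ₀ →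
        ∀ v : E3, ‖v‖ = 1 → (∃ u ∈ U₀, ⟪nQ l₁ l₂ u, v⟫ = 0) →
        ∀ y₀ : E3, ⟪y₀, v⟫ = 0 → ∀ s₀ : ℝ,
        ∀ σ : ℝ, ρ ≤ σ → σ ≤ σ₀ →
          muQ l₁ l₂ U χ
              (Xf l₁ l₂ '' {u : E2 | u ∈ U₀ ∧ |⟪nQ l₁ l₂ u, v⟫| ≤ Real.sqrt ρ} ∩
                {x : E3 | infDist x (tube v y₀ s₀ (C₁ * ρ) L) ≤ σ}) ≤
            ENNReal.ofReal (C * Real.sqrt ρ * σ) := by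
  obtain ⟨R, hR⟩ := hU₀.isBounded.subset_closedBall 0
  set N := 1 + (l₁ ^ 2 + l₂ ^ 2) * R ^ 2
  set d := min |l₁| |l₂| / N
  have hd : 0 < d := div_pos (lt_min (abs_pos.2 (left_ne_zero_of_mul hl.ne'))
    (abs_pos.2 (right_ne_zero_of_mul hl.ne'))) (by positivity)
  set K := 2 * N * (4 * √N * (C₁ + 1) / d)
  refine ⟨1, ⟨one_pos, le_rfl⟩, 1, ⟨one_pos, le_rfl⟩, max 1 (Mχ * K), le_max_left _ _, ?_⟩
  intro U _ _ _ χ _ hχM _ ρ hρ _ v hv ⟨u₀, hu₀, hu₀v⟩ y₀ hy₀ s₀ σ hρσ _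
  have hσ : 0 < σ := hρ.trans_le hρσ
  have hC₁ρ : 0 ≤ C₁ * ρ := by positivity
  have hdet : d ≤ |l₁ * v 0 * v 0 - l₂ * v 1 * -v 1| := by
    convert min_abs_div_le_abs_of_inner_nQ_eq_zero hl (mem_closedBall_zero_iff.1 (hR hu₀)) hv hu₀v
      using 2
    ring
  calc muQ l₁ l₂ U χ _
      ≤ ENNReal.ofReal Mχ * μH[2] (quadChart l₁ l₂ '' (closedBall 0 R ∩ _)) :=
        (muQ_apply_le hχM _).trans <| by
          gcongr; exact image_sublevel_inter_thickening_subset hR hv hy₀ hC₁ρ (by linarith)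
    _ ≤ ENNReal.ofReal Mχ * ENNReal.ofReal (2 * N * (4 * (√N * √ρ) * (C₁ * ρ + σ) / d)) := by
        gcongr
        exact hausdorffMeasure_quadChart_image_le l₁ l₂ R hd hdet _ _
          (by positivity) (by positivity)
    _ ≤ ENNReal.ofReal (max 1 (Mχ * K) * √ρ * σ) := by
        rw [← ENNReal.ofReal_mul hMχ]
        refine ENNReal.ofReal_le_ofReal ?_
        calc Mχ * (2 * N * (4 * (√N * √ρ) * (C₁ * ρ + σ) / d))
            ≤ Mχ * (2 * N * (4 * (√N * √ρ) * ((C₁ + 1) * σ) / d)) := by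
              gcongr; nlinarith
          _ = Mχ * K * √ρ * σ := by ring
          _ ≤ max 1 (Mχ * K) * √ρ * σ := by gcongr; exact le_max_right _ _
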